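/- Fix $k > 0$, a unit vector $n \in \mathbb{R}^3$, and a point $z \in \mathbb{R}^3$. Define $\Phi^\infty_p : S^2 \to \mathbb{C}^3$ by $\Phi^\infty_p(\hat\xi) = -ik\,\hat\xi\,[\lambda + 2\mu (n \cdot \hat\xi)^2] e^{-ik\,\hat\xi \cdot z}$ with $\lambda + 2\mu > 0$, $\mu > 0$, $\lambda + \mu \ne 0$. Then $\Phi^\infty_p$ is not identically zero on $S^2$, and distinct pairs $(z, n)$ and $(z', n')$ with $z \neq z'$ yield distinct functions $\Phi^\infty_p$. -/

import Mathlib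

open scoped RealInnerProductSpace

/-- Compressional part of the far-field pattern of the test field generated by a
vanishing penny-shaped trial fracture at `z` with normal `n` and constant mode-I
opening. -/
noncomputable def PhiP (k lam mu : ℝ) (z n ξ : EuclideanSpace ℝ (Fin 3)) :
    Fin 3 → ℂ := fun i =>
  (-Complex.I * (k : ℂ) * ((lam : ℂ) + 2 * (mu : ℂ) * ((⟪n, ξ⟫ : ℝ) : ℂ) ^ 2) *
    Complex.exp (-Complex.I * (k : ℂ) * ((⟪ξ, z⟫ : ℝ) : ℂ))) * ((ξ i : ℝ) : ℂ)

open Complex in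
lemma coeffEq (k lam mu : ℝ) (z n z' n' : EuclideanSpace ℝ (Fin 3))
    (ξ : EuclideanSpace ℝ (Fin 3)) (hξ : ‖ξ‖ = 1)
    (h : PhiP k lam mu z n ξ = PhiP k lam mu z' n' ξ) :
    -I * (k:ℂ) * ((lam:ℂ) + 2*(mu:ℂ)*((⟪n,ξ⟫ : ℝ):ℂ)^2) * Complex.exp (-I*(k:ℂ)*((⟪ξ,z⟫:ℝ):ℂ))
      = -I * (k:ℂ) * ((lam:ℂ) + 2*(mu:ℂ)*((⟪n',ξ⟫ : ℝ):ℂ)^2) * Complex.exp (-I*(k:ℂ)*((⟪ξ,z'⟫:ℝ):ℂ)) := by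
  have hne : ξ ≠ 0 := by
    intro h0; rw [h0, norm_zero] at hξ; norm_num at hξ
  have hex : ∃ i, ξ i ≠ 0 := by
    by_contra hc; push_neg at hc
    exact hne (PiLp.ext fun i => hc i)
  obtain ⟨i, hi⟩ := hex
  have h2 := congrFun h i
  unfold PhiP at h2
  exact mul_right_cancel₀ (by exact_mod_cast hi) h2

open Complex in
lemma multPi (k lam mu : ℝ) (hk : 0 < k) (z n z' n' : EuclideanSpace ℝ (Fin 3))
    (H : ∀ ξ ∈ Metric.sphere (0 : EuclideanSpace ℝ (Fin 3)) 1,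
      PhiP k lam mu z n ξ = PhiP k lam mu z' n' ξ)
    (ξ : EuclideanSpace ℝ (Fin 3)) (hξ : ‖ξ‖ = 1)
    (hA : lam + 2*mu*(⟪n,ξ⟫:ℝ)^2 ≠ 0) :
    ∃ m : ℤ, k * ⟪ξ, z' - z⟫ = m * Real.pi := by
  set p : ℝ := ⟪ξ, z⟫ with hp
  set q : ℝ := ⟪ξ, z'⟫ with hq
  have hξm : ξ ∈ Metric.sphere (0 : EuclideanSpace ℝ (Fin 3)) 1 :=
    mem_sphere_zero_iff_norm.mpr hξ
  have hξm' : -ξ ∈ Metric.sphere (0 : EuclideanSpace ℝ (Fin 3)) 1 :=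
    mem_sphere_zero_iff_norm.mpr (by rw [norm_neg, hξ])
  have e1 := coeffEq k lam mu z n z' n' ξ hξ (H ξ hξm)
  have e2 := coeffEq k lam mu z n z' n' (-ξ) (by rw [norm_neg, hξ]) (H (-ξ) hξm')
  rw [inner_neg_right, inner_neg_right, inner_neg_left, inner_neg_left] at e2
  set A : ℂ := (lam:ℂ) + 2*(mu:ℂ)*((⟪n,ξ⟫:ℝ):ℂ)^2 with hAdef
  set A' : ℂ := (lam:ℂ) + 2*(mu:ℂ)*((⟪n',ξ⟫:ℝ):ℂ)^2 with hA'def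
  have e2' : -I * (k:ℂ) * A * Complex.exp (I*(k:ℂ)*((p:ℂ)))
      = -I * (k:ℂ) * A' * Complex.exp (I*(k:ℂ)*((q:ℂ))) := by
    have h1 : ((-p : ℝ) : ℂ) = -(p:ℂ) := by push_cast; ring
    have h2 : ((-q : ℝ) : ℂ) = -(q:ℂ) := by push_cast; ring
    have h3 : ((-(⟪n,ξ⟫:ℝ) : ℝ) : ℂ)^2 = ((⟪n,ξ⟫:ℝ):ℂ)^2 := by push_cast; ring
    have h4 : ((-(⟪n',ξ⟫:ℝ) : ℝ) : ℂ)^2 = ((⟪n',ξ⟫:ℝ):ℂ)^2 := by push_cast; ring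
    rw [h1, h2, h3, h4] at e2
    rw [show I*(k:ℂ)*(p:ℂ) = -I*(k:ℂ)*(-(p:ℂ)) from by ring,
        show I*(k:ℂ)*(q:ℂ) = -I*(k:ℂ)*(-(q:ℂ)) from by ring]
    exact e2
  have hAne : (-I * (k:ℂ) * A) ≠ 0 := by
    apply mul_ne_zero (mul_ne_zero (neg_ne_zero.mpr I_ne_zero) ?_) ?_
    · exact_mod_cast hk.ne'
    · rw [hAdef]
      intro h0
      apply hA
      have : ((lam + 2*mu*(⟪n,ξ⟫:ℝ)^2 : ℝ) : ℂ) = 0 := by push_cast; linear_combination h0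
      exact_mod_cast this
  set E : ℂ := Complex.exp (I*(k:ℂ)*((q:ℂ)-(p:ℂ))) with hE
  have hu1 : Complex.exp (-I*(k:ℂ)*(p:ℂ)) = Complex.exp (-I*(k:ℂ)*(q:ℂ)) * E := by
    rw [hE, ← Complex.exp_add]; congr 1; ring
  have hu2 : Complex.exp (I*(k:ℂ)*(q:ℂ)) = Complex.exp (I*(k:ℂ)*(p:ℂ)) * E := by
    rw [hE, ← Complex.exp_add]; congr 1; ring
  have hCE : -I*(k:ℂ)*A * E = -I*(k:ℂ)*A' := by
    rw [hu1] at e1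
    exact mul_right_cancel₀ (Complex.exp_ne_zero _)
      (show -I*(k:ℂ)*A * E * Complex.exp (-I*(k:ℂ)*(q:ℂ))
          = -I*(k:ℂ)*A' * Complex.exp (-I*(k:ℂ)*(q:ℂ)) from by linear_combination e1)
  have h5 : -I*(k:ℂ)*A * Complex.exp (I*(k:ℂ)*(p:ℂ))
      = -I*(k:ℂ)*A * (E * E * Complex.exp (I*(k:ℂ)*(p:ℂ))) := by
    calc -I*(k:ℂ)*A * Complex.exp (I*(k:ℂ)*(p:ℂ))
        = -I*(k:ℂ)*A' * Complex.exp (I*(k:ℂ)*(q:ℂ)) := e2'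
      _ = (-I*(k:ℂ)*A * E) * (Complex.exp (I*(k:ℂ)*(p:ℂ)) * E) := by rw [hCE, hu2]
      _ = -I*(k:ℂ)*A * (E * E * Complex.exp (I*(k:ℂ)*(p:ℂ))) := by ring
  have h6 : Complex.exp (I*(k:ℂ)*(p:ℂ)) = E * E * Complex.exp (I*(k:ℂ)*(p:ℂ)) :=
    mul_left_cancel₀ hAne h5
  have hEE : E * E = 1 := by
    have := mul_right_cancel₀ (Complex.exp_ne_zero (I*(k:ℂ)*(p:ℂ)))
      (show (1:ℂ) * Complex.exp (I*(k:ℂ)*(p:ℂ)) = (E*E) * Complex.exp (I*(k:ℂ)*(p:ℂ)) from by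
        rw [one_mul]; exact h6)
    exact this.symm
  have hEE' : Complex.exp (I*(k:ℂ)*((q:ℂ)-(p:ℂ)) + I*(k:ℂ)*((q:ℂ)-(p:ℂ))) = 1 := by
    rw [Complex.exp_add, ← hE]; exact hEE
  obtain ⟨m, hm⟩ := Complex.exp_eq_one_iff.mp hEE'
  refine ⟨m, ?_⟩
  have h9 : ((2*(k*(q-p)) : ℝ) : ℂ) * I = ((m*(2*Real.pi) : ℝ):ℂ) * I := by
    push_cast
    linear_combination hm
  have h10 := mul_right_cancel₀ Complex.I_ne_zero h9
  have h11 : 2*(k*(q-p)) = (m:ℝ)*(2*Real.pi) := by exact_mod_cast h10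
  rw [inner_sub_right]
  linarith

private lemma conclude (a b t : ℝ) (m0 m1 m2 : ℤ) (ht : 0 < t) (ht1 : t ≤ 1)
    (hMt : (|a|+|b|) * t < Real.pi)
    (h0' : a = m0 * Real.pi)
    (h1' : Real.cos t * a + Real.sin t * b = m1 * Real.pi)
    (h2' : Real.cos t * a - Real.sin t * b = m2 * Real.pi) : a = 0 ∧ b = 0 := by
  have hsinpos : 0 < Real.sin t :=
    Real.sin_pos_of_pos_of_lt_pi ht (by nlinarith [Real.pi_gt_three])
  have hsinle : Real.sin t ≤ t := Real.sin_le ht.le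
  have hcosle : Real.cos t ≤ 1 := Real.cos_le_one t
  have hcosge : 1 - t^2/2 ≤ Real.cos t := Real.one_sub_sq_div_two_le_cos
  have hcoslt : Real.cos t < 1 := by
    nlinarith [Real.sin_sq_add_cos_sq t, mul_pos hsinpos hsinpos]
  have e2 : 1 - Real.cos t ≤ t := by nlinarith
  have hbound1 : |Real.cos t * a + Real.sin t * b - a| < Real.pi := by
    have e1 : |Real.cos t * a + Real.sin t * b - a| ≤ |a| * (1 - Real.cos t) + |b| * Real.sin t := by
      have h : Real.cos t * a + Real.sin t * b - a = -(a * (1 - Real.cos t)) + b * Real.sin t := by ring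
      rw [h]
      calc |(-(a * (1 - Real.cos t)) + b * Real.sin t)|
          ≤ |(-(a * (1 - Real.cos t)))| + |b * Real.sin t| := abs_add_le _ _
        _ = |a| * (1 - Real.cos t) + |b| * Real.sin t := by
            rw [abs_neg, abs_mul, abs_mul, abs_of_nonneg (show (0:ℝ) ≤ 1 - Real.cos t by linarith), abs_of_nonneg hsinpos.le]
    calc |Real.cos t * a + Real.sin t * b - a| ≤ |a| * (1 - Real.cos t) + |b| * Real.sin t := e1
      _ ≤ |a| * t + |b| * t := add_le_add
          (mul_le_mul_of_nonneg_left e2 (abs_nonneg a))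
          (mul_le_mul_of_nonneg_left hsinle (abs_nonneg b))
      _ = (|a|+|b|) * t := by ring
      _ < Real.pi := hMt
  have hbound2 : |Real.cos t * a - Real.sin t * b - a| < Real.pi := by
    have e1 : |Real.cos t * a - Real.sin t * b - a| ≤ |a| * (1 - Real.cos t) + |b| * Real.sin t := by
      have h : Real.cos t * a - Real.sin t * b - a = -(a * (1 - Real.cos t)) + (-b) * Real.sin t := by ring
      rw [h]
      calc |(-(a * (1 - Real.cos t)) + (-b) * Real.sin t)|
          ≤ |(-(a * (1 - Real.cos t)))| + |(-b) * Real.sin t| := abs_add_le _ _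
        _ = |a| * (1 - Real.cos t) + |b| * Real.sin t := by
            rw [abs_neg, abs_mul, abs_mul, abs_neg, abs_of_nonneg (show (0:ℝ) ≤ 1 - Real.cos t by linarith), abs_of_nonneg hsinpos.le]
    calc |Real.cos t * a - Real.sin t * b - a| ≤ |a| * (1 - Real.cos t) + |b| * Real.sin t := e1
      _ ≤ |a| * t + |b| * t := add_le_add
          (mul_le_mul_of_nonneg_left e2 (abs_nonneg a))
          (mul_le_mul_of_nonneg_left hsinle (abs_nonneg b))
      _ = (|a|+|b|) * t := by ring
      _ < Real.pi := hMt
  have hm1 : m1 = m0 := by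
    have hh : |(m1:ℝ) - m0| * Real.pi < Real.pi := by
      rw [← abs_of_pos Real.pi_pos, ← abs_mul]
      have h : ((m1:ℝ) - m0) * Real.pi = Real.cos t * a + Real.sin t * b - a := by
        rw [h1', h0']; ring
      rw [h, abs_of_pos Real.pi_pos]
      exact hbound1
    have h5 : |(m1:ℝ) - m0| < 1 := by
      by_contra hcon
      push_neg at hcon
      nlinarith [Real.pi_pos]
    have h6 : |((m1 - m0 : ℤ):ℝ)| < 1 := by push_cast; exact h5
    have h7 : |m1 - m0| < 1 := by exact_mod_cast h6
    have := Int.abs_lt_one_iff.mp h7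
    omega
  have hm2 : m2 = m0 := by
    have hh : |(m2:ℝ) - m0| * Real.pi < Real.pi := by
      rw [← abs_of_pos Real.pi_pos, ← abs_mul]
      have h : ((m2:ℝ) - m0) * Real.pi = Real.cos t * a - Real.sin t * b - a := by
        rw [h2', h0']; ring
      rw [h, abs_of_pos Real.pi_pos]
      exact hbound2
    have h5 : |(m2:ℝ) - m0| < 1 := by
      by_contra hcon
      push_neg at hcon
      nlinarith [Real.pi_pos]
    have h6 : |((m2 - m0 : ℤ):ℝ)| < 1 := by push_cast; exact h5
    have h7 : |m2 - m0| < 1 := by exact_mod_cast h6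
    have := Int.abs_lt_one_iff.mp h7
    omega
  rw [hm1] at h1'
  rw [hm2] at h2'
  have E1 : Real.cos t * a + Real.sin t * b = a := by rw [h1', ← h0']
  have E2 : Real.cos t * a - Real.sin t * b = a := by rw [h2', ← h0']
  have hbz : b = 0 := by
    have h : Real.sin t * b = 0 := by linarith
    rcases mul_eq_zero.mp h with h | h
    · exact absurd h hsinpos.ne'
    · exact h
  have haz : a = 0 := by
    have h8 : a * (Real.cos t - 1) = 0 := by
      rw [hbz] at E1; nlinarith [E1]
    rcases mul_eq_zero.mp h8 with h | h
    · exact h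
    · exfalso; nlinarith
  exact ⟨haz, hbz⟩

private lemma Apos (lam mu s T : ℝ) (hmu : 0 < mu) (hlm2 : 0 < lam + 2*mu)
    (hT1 : T ≤ 1) (hTsq : 2*mu*T^2 ≤ (lam+2*mu)/4) (hs : |s| ≤ T) :
    0 < lam + 2*mu*(Real.cos s)^2 := by
  have hT0 : 0 ≤ T := le_trans (abs_nonneg s) hs
  have hs2 : s^2 ≤ T^2 := by
    rw [← sq_abs s]
    exact pow_le_pow_left₀ (abs_nonneg s) hs 2
  have hs1 : s^2 ≤ 1 := le_trans hs2 (by nlinarith)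
  have hc := Real.one_sub_sq_div_two_le_cos (x := s)
  have hcnn : 0 ≤ Real.cos s := by nlinarith
  have hcos2 : 1 - s^2 ≤ (Real.cos s)^2 := by
    nlinarith [mul_nonneg (by linarith : (0:ℝ) ≤ Real.cos s - (1 - s^2/2))
      (by linarith : (0:ℝ) ≤ Real.cos s + (1 - s^2/2))]
  have h2mus : 2*mu*s^2 ≤ (lam+2*mu)/4 := by nlinarith
  nlinarith [mul_le_mul_of_nonneg_left hcos2 (by positivity : (0:ℝ) ≤ 2*mu)]

lemma key (k lam mu : ℝ) (hk : 0 < k) (hmu : 0 < mu) (hlm2 : 0 < lam + 2*mu)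
    (z n z' n' w : EuclideanSpace ℝ (Fin 3)) (hn : ‖n‖ = 1) (hw : ‖w‖ = 1)
    (hnw : ⟪n, w⟫ = 0)
    (H : ∀ ξ ∈ Metric.sphere (0 : EuclideanSpace ℝ (Fin 3)) 1,
      PhiP k lam mu z n ξ = PhiP k lam mu z' n' ξ) :
    ⟪n, z' - z⟫ = 0 ∧ ⟪w, z' - z⟫ = 0 := by
  have hnn : ⟪n, n⟫ = (1:ℝ) := by rw [real_inner_self_eq_norm_sq, hn]; norm_num
  set d : EuclideanSpace ℝ (Fin 3) := z' - z with hd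
  obtain ⟨a, ha⟩ : ∃ a : ℝ, a = k * ⟪n, d⟫ := ⟨_, rfl⟩
  obtain ⟨b, hb⟩ : ∃ b : ℝ, b = k * ⟪w, d⟫ := ⟨_, rfl⟩
  obtain ⟨M, hM⟩ : ∃ M : ℝ, M = |a| + |b| := ⟨_, rfl⟩
  have hMnn : 0 ≤ M := by rw [hM]; positivity
  have hM1 : 0 < 2*(M+1) := by linarith
  obtain ⟨t, ht, ht1, htsq, htpi⟩ :
      ∃ t : ℝ, 0 < t ∧ t ≤ 1 ∧ 2*mu*t^2 ≤ (lam+2*mu)/4 ∧ t ≤ Real.pi/(2*(M+1)) := by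
    refine ⟨min (min 1 (Real.sqrt ((lam+2*mu)/(2*mu)) / 2)) (Real.pi/(2*(M+1))), ?_, ?_, ?_, ?_⟩
    · apply lt_min (lt_min one_pos (by positivity))
      exact div_pos Real.pi_pos hM1
    · exact le_trans (min_le_left _ _) (min_le_left _ _)
    · have htsqrt : min (min 1 (Real.sqrt ((lam+2*mu)/(2*mu)) / 2)) (Real.pi/(2*(M+1)))
          ≤ Real.sqrt ((lam+2*mu)/(2*mu)) / 2 :=
        le_trans (min_le_left _ _) (min_le_right _ _)
      have ht0 : 0 ≤ min (min 1 (Real.sqrt ((lam+2*mu)/(2*mu)) / 2)) (Real.pi/(2*(M+1))) := by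
        apply le_min (le_min zero_le_one (by positivity))
        exact (div_pos Real.pi_pos hM1).le
      have h1 : (min (min 1 (Real.sqrt ((lam+2*mu)/(2*mu)) / 2)) (Real.pi/(2*(M+1))))^2
          ≤ (Real.sqrt ((lam+2*mu)/(2*mu)) / 2)^2 := pow_le_pow_left₀ ht0 htsqrt 2
      have h2 : (Real.sqrt ((lam+2*mu)/(2*mu)))^2 = (lam+2*mu)/(2*mu) := by
        rw [Real.sq_sqrt]; positivity
      rw [div_pow, h2] at h1
      have h3 : 2*mu*((lam+2*mu)/(2*mu)/2^2) = (lam+2*mu)/4 := by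
        field_simp; ring
      nlinarith
    · exact min_le_right _ _
  clear_value d
  set ξ : ℝ → EuclideanSpace ℝ (Fin 3) := fun s => Real.cos s • n + Real.sin s • w with hξ
  have hnorm : ∀ s, ‖ξ s‖ = 1 := by
    intro s
    have hsq : ‖ξ s‖^2 = 1 := by
      rw [hξ]
      simp only [norm_add_sq_real, norm_smul, real_inner_smul_left, real_inner_smul_right,
        hnw, Real.norm_eq_abs, hn, hw, mul_one, mul_zero]
      rw [sq_abs, sq_abs, add_zero]
      nlinarith [Real.sin_sq_add_cos_sq s]
    have h1 : ‖ξ s‖ = Real.sqrt (‖ξ s‖^2) := (Real.sqrt_sq (norm_nonneg _)).symm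
    rw [h1, hsq, Real.sqrt_one]
  have hinn : ∀ s, ⟪n, ξ s⟫ = Real.cos s := by
    intro s
    rw [hξ]
    simp only [inner_add_right, real_inner_smul_right, hnn, hnw, mul_one, mul_zero, add_zero]
  have hind : ∀ s, (⟪ξ s, d⟫:ℝ) = Real.cos s * ⟪n, d⟫ + Real.sin s * ⟪w, d⟫ := by
    intro s
    rw [hξ]
    simp only [inner_add_left, real_inner_smul_left]
  have mult : ∀ s, |s| ≤ t → ∃ m : ℤ, k * ⟪ξ s, d⟫ = m * Real.pi := by
    intro s hs
    rw [hd]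
    exact multPi k lam mu hk z n z' n' H (ξ s) (hnorm s)
      (by rw [hinn]; exact (Apos lam mu s t hmu hlm2 ht1 htsq hs).ne')
  obtain ⟨m0, h0⟩ := mult 0 (by simp [abs_of_nonneg, ht.le])
  obtain ⟨m1, h1⟩ := mult t (by rw [abs_of_pos ht])
  obtain ⟨m2, h2⟩ := mult (-t) (by rw [abs_neg, abs_of_pos ht])
  rw [hind, Real.cos_zero, Real.sin_zero] at h0
  rw [hind] at h1
  rw [hind, Real.cos_neg, Real.sin_neg] at h2
  have h0' : a = m0 * Real.pi := by rw [ha]; rw [← h0]; ring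
  have h1' : Real.cos t * a + Real.sin t * b = m1 * Real.pi := by
    rw [ha, hb]; rw [← h1]; ring
  have h2' : Real.cos t * a - Real.sin t * b = m2 * Real.pi := by
    rw [ha, hb]; rw [← h2]; ring
  have hMt : (|a|+|b|) * t < Real.pi := by
    have hpi : 0 < Real.pi := Real.pi_pos
    have h4 : M / (2*(M+1)) < 1 := by
      rw [div_lt_one hM1]; linarith
    have h5 : 0 < M / (2*(M+1)) ∨ M = 0 := by
      rcases eq_or_lt_of_le hMnn with h | h
      · exact Or.inr h.symm
      · exact Or.inl (div_pos h hM1)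
    rw [← hM]
    calc M * t ≤ M * (Real.pi/(2*(M+1))) := mul_le_mul_of_nonneg_left htpi hMnn
      _ = Real.pi * (M / (2*(M+1))) := by field_simp
      _ < Real.pi * 1 := by
          apply mul_lt_mul_of_pos_left h4 hpi
      _ = Real.pi := mul_one _
  obtain ⟨haz, hbz⟩ := conclude a b t m0 m1 m2 ht ht1 hMt h0' h1' h2'
  constructor
  · rw [ha] at haz
    rcases mul_eq_zero.mp haz with h | h
    · exact absurd h hk.ne'
    · exact hd ▸ h
  · rw [hb] at hbz
    rcases mul_eq_zero.mp hbz with h | h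
    · exact absurd h hk.ne'
    · exact hd ▸ h

private lemma normalize_unit (n x : EuclideanSpace ℝ (Fin 3)) (hx : x ≠ 0) (ho : ⟪n, x⟫ = 0) :
    ∃ w : EuclideanSpace ℝ (Fin 3), ‖w‖ = 1 ∧ ⟪n, w⟫ = 0 ∧ ∃ c : ℝ, 0 < c ∧ w = c • x := by
  have hxn : ‖x‖ ≠ 0 := norm_ne_zero_iff.mpr hx
  refine ⟨‖x‖⁻¹ • x, ?_, ?_, ‖x‖⁻¹, by positivity, rfl⟩
  · rw [norm_smul, norm_inv, norm_norm, inv_mul_cancel₀ hxn]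
  · rw [real_inner_smul_right, ho, mul_zero]

/-- The test far-field pattern `Φ^∞_p` is not identically zero on the unit sphere, and
distinct sampling points `z ≠ z'` yield distinct patterns. -/
theorem stmt15 (k lam mu : ℝ) (hk : 0 < k) (hmu : 0 < mu)
    (hlm2 : 0 < lam + 2 * mu) (hlm : lam + mu ≠ 0)
    (z n : EuclideanSpace ℝ (Fin 3)) (hn : ‖n‖ = 1) :
    (∃ ξ ∈ Metric.sphere (0 : EuclideanSpace ℝ (Fin 3)) 1, PhiP k lam mu z n ξ ≠ 0) ∧
    (∀ z' n' : EuclideanSpace ℝ (Fin 3), ‖n'‖ = 1 → z ≠ z' →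
      ∃ ξ ∈ Metric.sphere (0 : EuclideanSpace ℝ (Fin 3)) 1,
        PhiP k lam mu z n ξ ≠ PhiP k lam mu z' n' ξ) := by
  have hnn : ⟪n, n⟫ = (1:ℝ) := by rw [real_inner_self_eq_norm_sq, hn]; norm_num
  have hn0 : n ≠ 0 := by
    intro h0; rw [h0, norm_zero] at hn; norm_num at hn
  obtain ⟨i, hi⟩ : ∃ i, n i ≠ 0 := by
    by_contra hc; push_neg at hc
    exact hn0 (PiLp.ext fun i => hc i)
  constructor
  · refine ⟨n, mem_sphere_zero_iff_norm.mpr hn, ?_⟩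
    intro h0
    have h1 := congrFun h0 i
    unfold PhiP at h1
    simp only [Pi.zero_apply] at h1
    rw [hnn] at h1
    have hC : (-Complex.I * (k:ℂ) * ((lam:ℂ) + 2*(mu:ℂ)*(((1:ℝ):ℝ):ℂ)^2) *
        Complex.exp (-Complex.I * (k:ℂ) * ((⟪n,z⟫:ℝ):ℂ))) ≠ 0 := by
      apply mul_ne_zero (mul_ne_zero (mul_ne_zero (neg_ne_zero.mpr Complex.I_ne_zero) ?_) ?_)
        (Complex.exp_ne_zero _)
      · exact_mod_cast hk.ne'
      · have : ((lam + 2*mu : ℝ) : ℂ) ≠ 0 := by exact_mod_cast hlm2.ne'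
        intro h2; apply this; rw [← h2]; push_cast; ring
    rcases mul_eq_zero.mp h1 with h | h
    · exact hC h
    · exact hi (Complex.ofReal_eq_zero.mp h)
  · intro z' n' hn' hzz'
    by_contra hcon
    push_neg at hcon
    have hd0 : z' - z ≠ 0 := sub_ne_zero.mpr (Ne.symm hzz')
    set d : EuclideanSpace ℝ (Fin 3) := z' - z with hd
    by_cases hx : d - ⟪n, d⟫ • n ≠ 0
    · -- normal case: projection of d off n is nonzero
      have ho : ⟪n, d - ⟪n, d⟫ • n⟫ = 0 := by
        rw [inner_sub_right, real_inner_smul_right, hnn, mul_one, sub_self]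
      obtain ⟨w, hw1, hw2, c, hc, hwc⟩ := normalize_unit n _ hx ho
      obtain ⟨-, hkey2⟩ := key k lam mu hk hmu hlm2 z n z' n' w hn hw1 hw2 hcon
      rw [← hd, hwc, real_inner_smul_left] at hkey2
      have hxd : ⟪d - ⟪n, d⟫ • n, d⟫ = 0 := by
        rcases mul_eq_zero.mp hkey2 with h | h
        · exact absurd h hc.ne'
        · exact h
      have hn1 : ⟪d - ⟪n, d⟫ • n, n⟫ = 0 := by
        rw [inner_sub_left, real_inner_smul_left, real_inner_comm d n, hnn, mul_one, sub_self]
      have h2 : ⟪d - ⟪n, d⟫ • n, d - ⟪n, d⟫ • n⟫ = (0:ℝ) := by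
        rw [inner_sub_right, hxd, real_inner_smul_right, hn1, mul_zero, zero_sub, neg_zero]
      exact hx (inner_self_eq_zero.mp h2)
    · -- degenerate case : d is parallel to n
      push_neg at hx
      have hdn : d = ⟪n, d⟫ • n := by
        have := sub_eq_zero.mp hx
        linear_combination (norm := module) this
      -- construct a unit vector orthogonal to n
      have hy : (EuclideanSpace.single 0 1 : EuclideanSpace ℝ (Fin 3)) - ⟪n, EuclideanSpace.single 0 1⟫ • n ≠ 0 ∨
          (EuclideanSpace.single 1 1 : EuclideanSpace ℝ (Fin 3)) - ⟪n, EuclideanSpace.single 1 1⟫ • n ≠ 0 := by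
        by_contra hcc
        push_neg at hcc
        obtain ⟨hc0, hc1⟩ := hcc
        have he0 := sub_eq_zero.mp hc0
        have he1 := sub_eq_zero.mp hc1
        have hi00 := congrFun (congrArg WithLp.ofLp he0) 0
        have hi01 := congrFun (congrArg WithLp.ofLp he0) 1
        have hi11 := congrFun (congrArg WithLp.ofLp he1) 1
        have hs : ∀ j : Fin 3, ⟪n, (EuclideanSpace.single j 1 : EuclideanSpace ℝ (Fin 3))⟫ = n j := by
          intro j; rw [EuclideanSpace.inner_single_right]; simp
        rw [hs 0] at hi00 hi01
        rw [hs 1] at hi11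
        have e00 : (1:ℝ) = n 0 * n 0 := by simpa [EuclideanSpace.single_apply] using hi00
        have e01 : (0:ℝ) = n 0 * n 1 := by simpa [EuclideanSpace.single_apply] using hi01
        have e11 : (1:ℝ) = n 1 * n 1 := by simpa [EuclideanSpace.single_apply] using hi11
        nlinarith [e00, e01, e11]
      have hcontr : ⟪n, d⟫ = 0 := by
        rcases hy with hy | hy
        · have ho : ⟪n, (EuclideanSpace.single 0 1 : EuclideanSpace ℝ (Fin 3)) - ⟪n, EuclideanSpace.single 0 1⟫ • n⟫ = 0 := by
            rw [inner_sub_right, real_inner_smul_right, hnn, mul_one, sub_self]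
          obtain ⟨w, hw1, hw2, c, hc, hwc⟩ := normalize_unit n _ hy ho
          obtain ⟨hkey1, -⟩ := key k lam mu hk hmu hlm2 z n z' n' w hn hw1 hw2 hcon
          rw [← hd] at hkey1
          exact hkey1
        · have ho : ⟪n, (EuclideanSpace.single 1 1 : EuclideanSpace ℝ (Fin 3)) - ⟪n, EuclideanSpace.single 1 1⟫ • n⟫ = 0 := by
            rw [inner_sub_right, real_inner_smul_right, hnn, mul_one, sub_self]
          obtain ⟨w, hw1, hw2, c, hc, hwc⟩ := normalize_unit n _ hy ho
          obtain ⟨hkey1, -⟩ := key k lam mu hk hmu hlm2 z n z' n' w hn hw1 hw2 hcon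
          rw [← hd] at hkey1
          exact hkey1
      apply hd0
      rw [hdn, hcontr, zero_smul]
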